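/- Let 0 < p ≤ 1, let w be a weight on ℝⁿ, and let c, C₀, A > 0. Suppose that for each k ∈ ℤ we are given cubes {Q^k_i}_i and measurable functions {b^k_i}_i such that each b^k_i is supported in Q^k_i, ‖b^k_i‖_{L^∞} ≤ C₀·2^k, Σ_i w(Q^k_i) ≤ c·2^{−kp}, and Σ_i χ_{Q^k_i}(x) ≤ A for all x. Then there exists a constant C > 0, depending only on p, A, C₀, such that for every k₀ ∈ ℤ, ‖Σ_{k=−∞}^{k₀} Σ_i b^k_i‖_{L^2_w} ≤ C·2^{k₀(1−p/2)}·c^{1/2}. -/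

import Mathlib

open MeasureTheory Metric Set ENNReal
open scoped Classical

noncomputable section

abbrev Rn (n : ℕ) : Type := EuclideanSpace ℝ (Fin n)

/-- Axis-parallel cube centered at `c` with side length `r`. -/
def cube {n : ℕ} (c : Rn n) (r : ℝ) : Set (Rn n) := {x | ∀ i, |x i - c i| ≤ r / 2}

/-- The measure `w(E) = ∫_E w` with density `w` w.r.t. Lebesgue measure. -/
def wm {n : ℕ} (w : Rn n → ℝ) : Measure (Rn n) :=
  volume.withDensity (fun x => ENNReal.ofReal (w x))

/-- Muckenhoupt `A_q` condition for `q > 1`. -/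
def IsAq {n : ℕ} (w : Rn n → ℝ) (q : ℝ) : Prop :=
  (∀ x, 0 ≤ w x) ∧ LocallyIntegrable w volume ∧
  ∃ C > 0, ∀ (c : Rn n) (r : ℝ), 0 < r →
    (((volume (cube c r)).toReal⁻¹ * ∫ x in cube c r, w x) *
      (((volume (cube c r)).toReal⁻¹ * ∫ x in cube c r, w x ^ (-1 / (q - 1))) ^ (q - 1))) ≤ C

/-- Muckenhoupt `A_1` condition. -/
def IsA1 {n : ℕ} (w : Rn n → ℝ) : Prop :=
  (∀ x, 0 ≤ w x) ∧ LocallyIntegrable w volume ∧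
  ∃ C > 0, ∀ (c : Rn n) (r : ℝ), 0 < r →
    ∀ᵐ y ∂(volume.restrict (cube c r)),
      (volume (cube c r)).toReal⁻¹ * ∫ x in cube c r, w x ≤ C * w y

/-- Muckenhoupt `A_q` condition for `q ≥ 1`. -/
def IsMuckenhoupt {n : ℕ} (w : Rn n → ℝ) (q : ℝ) : Prop :=
  if q = 1 then IsA1 w else IsAq w q

/-- The parametric Marcinkiewicz integral `μ^ρ_Ω`. -/
def marc {n : ℕ} (ρ : ℝ) (Ω f : Rn n → ℝ) (x : Rn n) : ℝ :=
  (∫ t in Ioi (0:ℝ),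
      (∫ y in {y : Rn n | dist x y ≤ t}, Ω (x - y) * ‖x - y‖ ^ (ρ - (n:ℝ)) * f y) ^ 2 *
        t ^ (-(2 * ρ + 1))) ^ ((1:ℝ)/2)

/-- `Ω` is homogeneous of degree zero. -/
def HomZero {n : ℕ} (Ω : Rn n → ℝ) : Prop :=
  ∀ t : ℝ, 0 < t → ∀ x : Rn n, x ≠ 0 → Ω (t • x) = Ω x

/-- `Ω` has mean value zero on the unit sphere `S^{n-1}`. -/
def MeanZero {n : ℕ} (Ω : Rn n → ℝ) : Prop :=
  ∫ x : Metric.sphere (0 : Rn n) 1, Ω (x : Rn n) ∂((volume : Measure (Rn n)).toSphere) = 0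

/-- `Ω ∈ Lip_α(S^{n-1})` with Lipschitz constant `L`. -/
def LipSphere {n : ℕ} (Ω : Rn n → ℝ) (α L : ℝ) : Prop :=
  ∀ x y : Rn n, ‖x‖ = 1 → ‖y‖ = 1 → |Ω x - Ω y| ≤ L * ‖x - y‖ ^ α

/-- `a` is a `w`-`(p,q,0)`-atom supported in the cube `Q(x₀, r)`. -/
def IsAtomOn {n : ℕ} (w : Rn n → ℝ) (p q : ℝ) (a : Rn n → ℝ) (x₀ : Rn n) (r : ℝ) : Prop :=
  Measurable a ∧ Integrable a volume ∧
  (∀ x, x ∉ cube x₀ r → a x = 0) ∧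
  (∫ x in cube x₀ r, |a x| ^ q * w x) ^ (1/q) ≤ (∫ x in cube x₀ r, w x) ^ (1/q - 1/p) ∧
  (∫ x, a x) = 0

/-- `a` is a `w`-`(p,q,0)`-atom. -/
def IsWAtom {n : ℕ} (w : Rn n → ℝ) (p q : ℝ) (a : Rn n → ℝ) : Prop :=
  ∃ (x₀ : Rn n) (r : ℝ), 0 < r ∧ IsAtomOn w p q a x₀ r

/-- The weighted `L^p` (quasi-)norm `‖f‖_{L^p_w} = (∫ |f|^p w)^{1/p}`. -/
def wLp {n : ℕ} (w : Rn n → ℝ) (p : ℝ) (f : Rn n → ℝ) : ℝ≥0∞ :=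
  (∫⁻ x, ENNReal.ofReal (|f x| ^ p * w x)) ^ (1/p)

/-!
For the level `k` put `g_k = Σ_i |b^k_i|` and `N_k = Σ_i χ_{Q^k_i} ≤ A`. Then `g_k ≤ C₀ 2^k N_k`,
so `g_k² ≤ C₀² 2^{2k} A N_k`, and integrating against `w` gives
`‖g_k‖_{L²_w} ≤ C₀ (A c)^{1/2} 2^{k(1-p/2)}` because `∫ N_k w = Σ_i w(Q^k_i) ≤ c 2^{-kp}`.
Minkowski's inequality for the countable sum over `k ≤ k₀` leaves a geometric series
with ratio `2^{-(1-p/2)} < 1`.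
-/

theorem ofReal_eq_ofReal_sqrt_sq (x : ℝ) : ENNReal.ofReal x = ENNReal.ofReal √x ^ 2 := by
  rw [← ENNReal.ofReal_pow (Real.sqrt_nonneg x), Real.sq_sqrt', ENNReal.ofReal_max,
    ENNReal.ofReal_zero, max_eq_left zero_le]

theorem ofReal_abs_tsum_tsum_le {κ ι : Type*} (f : κ → ι → ℝ) :
    ENNReal.ofReal |∑' k, ∑' i, f k i| ≤ ∑' k, ∑' i, ENNReal.ofReal |f k i| := by
  simp only [← Real.enorm_eq_ofReal_abs]
  exact enorm_tsum_le_tsum_enorm.trans (ENNReal.tsum_le_tsum fun k => enorm_tsum_le_tsum_enorm)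

section
variable {α : Type*} [MeasurableSpace α] {μ : Measure α}

theorem lintegral_tsum_rpow_le {ι : Type*} [Countable ι] {q : ℝ} (hq : 1 ≤ q)
    {f : ι → α → ℝ≥0∞} (hf : ∀ i, AEMeasurable (f i) μ) :
    (∫⁻ x, (∑' i, f i x) ^ q ∂μ) ^ (1 / q) ≤ ∑' i, (∫⁻ x, f i x ^ q ∂μ) ^ (1 / q) := by
  -- Minkowski for finite sums, passed to the supremum over finite partial sums by monotone
  -- convergence.
  have hq0 : 0 < q := zero_lt_one.trans_le hq
  have hfin (s : Finset ι) :
      (∫⁻ x, (∑ i ∈ s, f i x) ^ q ∂μ) ^ (1 / q) ≤ ∑ i ∈ s, (∫⁻ x, f i x ^ q ∂μ) ^ (1 / q) := by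
    simpa [eLpNorm'_eq_lintegral_enorm, Finset.sum_apply] using
      eLpNorm'_sum_le (μ := μ) (s := s) (fun i _ => (hf i).aestronglyMeasurable) hq
  have hpow (x : α) : (∑' i, f i x) ^ q = ⨆ s : Finset ι, (∑ i ∈ s, f i x) ^ q := by
    rw [ENNReal.tsum_eq_iSup_sum]
    exact (ENNReal.orderIsoRpow q hq0).map_iSup _
  have hdir : Directed (· ≤ ·) fun (s : Finset ι) x => (∑ i ∈ s, f i x) ^ q :=
    Monotone.directed_le fun s t hst x => by gcongr
  calc (∫⁻ x, (∑' i, f i x) ^ q ∂μ) ^ (1 / q)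
      = ⨆ s : Finset ι, (∫⁻ x, (∑ i ∈ s, f i x) ^ q ∂μ) ^ (1 / q) := by
        simp_rw [hpow]
        rw [lintegral_iSup_directed (fun s => (s.aemeasurable_fun_sum fun i _ => hf i).pow_const q)
          hdir]
        exact (ENNReal.orderIsoRpow (1 / q) (by positivity)).map_iSup _
    _ ≤ ∑' i, (∫⁻ x, f i x ^ q ∂μ) ^ (1 / q) :=
        iSup_le fun s => (hfin s).trans (ENNReal.sum_le_tsum s)

theorem lintegral_tsum_sq_le_of_le_indicator {ι : Type*} [Countable ι] {Q : ι → Set α}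
    (hQ : ∀ i, MeasurableSet (Q i)) {f : ι → α → ℝ≥0∞} {M A : ℝ≥0∞}
    (hf : ∀ i x, f i x ≤ M * (Q i).indicator (fun _ => 1) x)
    (hA : ∀ x, ∑' i, (Q i).indicator (fun _ => (1 : ℝ≥0∞)) x ≤ A) :
    ∫⁻ x, (∑' i, f i x) ^ 2 ∂μ ≤ M ^ 2 * A * ∑' i, μ (Q i) := by
  set N : α → ℝ≥0∞ := fun x => ∑' i, (Q i).indicator (fun _ => 1) x
  have hN : Measurable N := Measurable.tsum fun i => measurable_const.indicator (hQ i)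
  have hpt (x : α) : (∑' i, f i x) ^ 2 ≤ M ^ 2 * A * N x := by
    have hfN : ∑' i, f i x ≤ M * N x :=
      (ENNReal.tsum_le_tsum (hf · x)).trans_eq ENNReal.tsum_mul_left
    calc (∑' i, f i x) ^ 2 ≤ (M * N x) ^ 2 := by gcongr
      _ = M ^ 2 * (N x * N x) := by ring
      _ ≤ M ^ 2 * (A * N x) := by gcongr; exact hA x
      _ = M ^ 2 * A * N x := by ring
  calc ∫⁻ x, (∑' i, f i x) ^ 2 ∂μ ≤ ∫⁻ x, M ^ 2 * A * N x ∂μ := lintegral_mono hpt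
    _ = M ^ 2 * A * ∑' i, μ (Q i) := by
      rw [lintegral_const_mul _ hN,
        lintegral_tsum fun i => (measurable_const.indicator (hQ i)).aemeasurable]
      simp only [lintegral_indicator_const (hQ _), one_mul]

theorem lintegral_ofReal_sq_mul_le_lintegral_withDensity {w : α → ℝ} (hw : AEMeasurable w μ)
    {F : α → ℝ} {G : α → ℝ≥0∞} (hG : AEMeasurable G μ) (hFG : ∀ x, ENNReal.ofReal |F x| ≤ G x) :
    ∫⁻ x, ENNReal.ofReal (F x ^ 2 * w x) ∂μ ≤
      ∫⁻ x, G x ^ (2 : ℝ) ∂μ.withDensity fun x => ENNReal.ofReal (w x) := by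
  rw [lintegral_withDensity_eq_lintegral_mul₀ hw.ennreal_ofReal (hG.pow_const _)]
  refine lintegral_mono fun x => ?_
  rw [Pi.mul_apply, ENNReal.ofReal_mul (sq_nonneg _), mul_comm, ← sq_abs,
    ENNReal.ofReal_pow (abs_nonneg _), ENNReal.rpow_two]
  gcongr
  exact hFG x

theorem lintegral_tsum_ofReal_abs_sq_le {ι : Type*} [Countable ι] {Q : ι → Set α}
    (hQ : ∀ i, MeasurableSet (Q i)) {b : ι → α → ℝ} {M A S : ℝ} (hM : 0 ≤ M)
    (hb_supp : ∀ i x, x ∉ Q i → b i x = 0) (hb : ∀ i x, |b i x| ≤ M)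
    (hover : ∀ x, ∑' i, (Q i).indicator (fun _ => (1 : ℝ≥0∞)) x ≤ ENNReal.ofReal A)
    (hsum : ∑' i, μ (Q i) ≤ ENNReal.ofReal S) :
    (∫⁻ x, (∑' i, ENNReal.ofReal |b i x|) ^ (2 : ℝ) ∂μ) ^ ((1 : ℝ) / 2) ≤
      ENNReal.ofReal (M * √A * √S) := by
  have hf (i : ι) (x : α) :
      ENNReal.ofReal |b i x| ≤ ENNReal.ofReal M * (Q i).indicator (fun _ => 1) x := by
    by_cases hx : x ∈ Q i
    · simpa [hx] using ENNReal.ofReal_le_ofReal (hb i x)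
    · simp [hx, hb_supp i x hx]
  calc (∫⁻ x, (∑' i, ENNReal.ofReal |b i x|) ^ (2 : ℝ) ∂μ) ^ ((1 : ℝ) / 2)
      ≤ (ENNReal.ofReal M ^ 2 * ENNReal.ofReal A * ENNReal.ofReal S) ^ ((1 : ℝ) / 2) := by
        simp_rw [ENNReal.rpow_two]
        gcongr
        exact (lintegral_tsum_sq_le_of_le_indicator hQ hf hover).trans (by gcongr)
    _ = ENNReal.ofReal (M * √A * √S) := by
        rw [ofReal_eq_ofReal_sqrt_sq A, ofReal_eq_ofReal_sqrt_sq S, ← mul_pow, ← mul_pow,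
          ← ENNReal.ofReal_mul hM, ← ENNReal.ofReal_mul (by positivity), one_div]
        exact_mod_cast ENNReal.pow_rpow_inv_natCast two_ne_zero _

end

theorem hasSum_ite_le_zpow {a : ℝ} (ha : 1 < a) (k₀ : ℤ) :
    HasSum (fun k : ℤ => if k ≤ k₀ then a ^ k else 0) (a ^ k₀ / (1 - a⁻¹)) := by
  have ha0 : a ≠ 0 := by positivity
  have hinj : Function.Injective fun j : ℕ => k₀ - j := fun i j h => by simpa using h
  have hsupp : Function.support (fun k : ℤ => if k ≤ k₀ then a ^ k else 0) ⊆
      range fun j : ℕ => k₀ - j := fun k hk =>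
    ⟨(k₀ - k).toNat, by
      have hle : k ≤ k₀ := by by_contra h; simp [h] at hk
      dsimp only; omega⟩
  rw [← hinj.hasSum_iff fun k hk => Function.notMem_support.1 fun h => hk (hsupp h)]
  have hterm (j : ℕ) :
      (if k₀ - (j : ℤ) ≤ k₀ then a ^ (k₀ - (j : ℤ)) else 0) = a ^ k₀ * a⁻¹ ^ j := by
    rw [if_pos (by omega), zpow_sub₀ ha0, div_eq_mul_inv, zpow_natCast, inv_pow]
  simp only [Function.comp_def, hterm, div_eq_mul_inv]
  exact (hasSum_geometric_of_lt_one (by positivity) (inv_lt_one_of_one_lt₀ ha)).mul_left _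

theorem measurableSet_cube {n : ℕ} (c : Rn n) (r : ℝ) : MeasurableSet (cube c r) := by
  simp only [cube, ofPred_forall]
  exact MeasurableSet.iInter fun i => measurableSet_le (by fun_prop) measurable_const

theorem two_zpow_mul_sqrt_two_rpow (k : ℤ) (p : ℝ) :
    (2 : ℝ) ^ k * √((2 : ℝ) ^ (-(k : ℝ) * p)) = ((2 : ℝ) ^ (1 - p / 2)) ^ k := by
  rw [Real.sqrt_eq_rpow, ← Real.rpow_mul zero_le_two, ← Real.rpow_intCast, ← Real.rpow_intCast,
    ← Real.rpow_mul zero_le_two, ← Real.rpow_add two_pos]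
  ring_nf

theorem statement14_general (n : ℕ) (p C₀ A : ℝ) (hp1 : p ≤ 1)
    (hC₀ : 0 < C₀) (hA : 0 < A) :
    ∃ C > 0, ∀ w : Rn n → ℝ, (∀ x, 0 ≤ w x) → LocallyIntegrable w volume →
      ∀ cc : ℝ, 0 < cc →
      ∀ (ctr : ℤ → ℕ → Rn n) (rad : ℤ → ℕ → ℝ) (b : ℤ → ℕ → Rn n → ℝ),
        (∀ k i, 0 < rad k i) → (∀ k i, Measurable (b k i)) →
        (∀ k i x, x ∉ cube (ctr k i) (rad k i) → b k i x = 0) →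
        (∀ k i x, |b k i x| ≤ C₀ * (2 : ℝ) ^ k) →
        (∀ k : ℤ, (∑' i : ℕ, wm w (cube (ctr k i) (rad k i))) ≤
          ENNReal.ofReal (cc * (2 : ℝ) ^ (-(k : ℝ) * p))) →
        (∀ (k : ℤ) (x : Rn n),
          (∑' i : ℕ, (cube (ctr k i) (rad k i)).indicator (fun _ => (1 : ℝ≥0∞)) x) ≤
            ENNReal.ofReal A) →
        ∀ k₀ : ℤ,
          (∫⁻ x, ENNReal.ofReal
              ((∑' k : ℤ, ∑' i : ℕ, if k ≤ k₀ then b k i x else 0) ^ 2 * w x)) ^ ((1:ℝ)/2) ≤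
            ENNReal.ofReal (C * (2 : ℝ) ^ ((k₀ : ℝ) * (1 - p / 2)) * Real.sqrt cc) := by
  set ε := 1 - p / 2
  have h2ε : 1 < (2 : ℝ) ^ ε := Real.one_lt_rpow one_lt_two (by simp only [ε]; linarith)
  refine ⟨C₀ * √A / (1 - ((2 : ℝ) ^ ε)⁻¹),
    div_pos (by positivity) (sub_pos.2 (inv_lt_one_of_one_lt₀ h2ε)), ?_⟩
  intro w _ hw cc hcc ctr rad b _ hb_meas hb_supp hb hsum hover k₀
  set g : ℤ → Rn n → ℝ≥0∞ := fun k x => ∑' i, ENNReal.ofReal |if k ≤ k₀ then b k i x else 0|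
  have hg (k : ℤ) : Measurable (g k) := Measurable.tsum fun i => by
    split_ifs <;> fun_prop
  have hlevel (k : ℤ) : (∫⁻ x, g k x ^ (2 : ℝ) ∂wm w) ^ ((1 : ℝ) / 2) ≤
      ENNReal.ofReal (if k ≤ k₀ then C₀ * √A * √cc * ((2 : ℝ) ^ ε) ^ k else 0) := by
    refine (lintegral_tsum_ofReal_abs_sq_le (M := if k ≤ k₀ then C₀ * 2 ^ k else 0)
      (fun i => measurableSet_cube _ _) (by positivity) (fun i x hx => by simp [hb_supp k i x hx])
      (fun i x => by split_ifs <;> simp [hb k i x]) (hover k) (hsum k)).trans_eq ?_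
    split_ifs
    · rw [Real.sqrt_mul hcc.le, ← two_zpow_mul_sqrt_two_rpow]
      ring_nf
    · simp
  have hgeom : HasSum (fun k : ℤ => if k ≤ k₀ then C₀ * √A * √cc * ((2 : ℝ) ^ ε) ^ k else 0)
      (C₀ * √A * √cc * (((2 : ℝ) ^ ε) ^ k₀ / (1 - ((2 : ℝ) ^ ε)⁻¹))) := by
    simpa only [mul_ite, mul_zero] using (hasSum_ite_le_zpow h2ε k₀).mul_left (C₀ * √A * √cc)
  calc _ ≤ (∫⁻ x, (∑' k, g k x) ^ (2 : ℝ) ∂wm w) ^ ((1 : ℝ) / 2) := by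
        refine ENNReal.rpow_le_rpow ?_ (by norm_num)
        exact lintegral_ofReal_sq_mul_le_lintegral_withDensity hw.aestronglyMeasurable.aemeasurable
          (Measurable.tsum hg).aemeasurable fun x => ofReal_abs_tsum_tsum_le _
    _ ≤ ∑' k, (∫⁻ x, g k x ^ (2 : ℝ) ∂wm w) ^ ((1 : ℝ) / 2) :=
        lintegral_tsum_rpow_le one_le_two fun k => (hg k).aemeasurable
    _ ≤ ∑' k, ENNReal.ofReal (if k ≤ k₀ then C₀ * √A * √cc * ((2 : ℝ) ^ ε) ^ k else 0) :=
        ENNReal.tsum_le_tsum hlevel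
    _ = _ := by
        rw [← ENNReal.ofReal_tsum_of_nonneg (fun k => by positivity) hgeom.summable,
          hgeom.tsum_eq, ← Real.rpow_intCast, ← Real.rpow_mul zero_le_two, mul_comm ε]
        ring_nf

/-- the `L^2_w` estimate `‖Σ_{k ≤ k₀} Σ_i b^k_i‖_{L^2_w} ≤ C 2^{k₀(1−p/2)} c^{1/2}`. -/
theorem statement14 (n : ℕ) (p C₀ A : ℝ) (hp0 : 0 < p) (hp1 : p ≤ 1)
    (hC₀ : 0 < C₀) (hA : 0 < A) :
    ∃ C > 0, ∀ w : Rn n → ℝ, (∀ x, 0 ≤ w x) → LocallyIntegrable w volume →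
      ∀ cc : ℝ, 0 < cc →
      ∀ (ctr : ℤ → ℕ → Rn n) (rad : ℤ → ℕ → ℝ) (b : ℤ → ℕ → Rn n → ℝ),
        (∀ k i, 0 < rad k i) → (∀ k i, Measurable (b k i)) →
        (∀ k i x, x ∉ cube (ctr k i) (rad k i) → b k i x = 0) →
        (∀ k i x, |b k i x| ≤ C₀ * (2 : ℝ) ^ k) →
        (∀ k : ℤ, (∑' i : ℕ, wm w (cube (ctr k i) (rad k i))) ≤
          ENNReal.ofReal (cc * (2 : ℝ) ^ (-(k : ℝ) * p))) →
        (∀ (k : ℤ) (x : Rn n),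
          (∑' i : ℕ, (cube (ctr k i) (rad k i)).indicator (fun _ => (1 : ℝ≥0∞)) x) ≤
            ENNReal.ofReal A) →
        ∀ k₀ : ℤ,
          (∫⁻ x, ENNReal.ofReal
              ((∑' k : ℤ, ∑' i : ℕ, if k ≤ k₀ then b k i x else 0) ^ 2 * w x)) ^ ((1:ℝ)/2) ≤
            ENNReal.ofReal (C * (2 : ℝ) ^ ((k₀ : ℝ) * (1 - p / 2)) * Real.sqrt cc) :=
  statement14_general n p C₀ A hp1 hC₀ hA
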